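/- Let n be a positive natural number and let R = ℤ[t,t⁻¹] be the ring of Laurent polynomials over ℤ. Let N_β be the R-submodule of (Fin (2n) → R) spanned by the elements (t⁻¹−1) • e_i + e_{i+1} for i ∈ Fin (2n), where i+1 is taken cyclically in Fin (2n). Then the quotient module (Fin (2n) → R) ⧸ N_β is isomorphic as an R-module to R ⧸ Ideal.span {1 − (1−t⁻¹)^{2n}}. -/

import Mathlib

/-!
In the quotient the relations say `e_{i+1} = -c • e_i`, so every `e_j` equals `(-c)^j • e_0`,
and going once around the cycle gives `(1 - (-c)^m) • e_0 = 0`. Conversely the weighted sum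
`v ↦ ∑ (-c)^i v_i` kills the relations modulo `1 - (-c)^m`, the wrap-around relation
`e_0 + c • e_{m-1}` being the one that needs the modulus. Hence this weighted sum identifies the
quotient with `R ⧸ (1 - (-c)^m)`; for the wheel take `c = t⁻¹ - 1`.
-/

open LaurentPolynomial Fin.NatCast

section PowFinVal

variable {M : Type*} [Monoid M] {m : ℕ} {x : M}

theorem pow_finVal_add (hx : x ^ m = 1) (i j : Fin m) :
    x ^ ((i + j : Fin m) : ℕ) = x ^ (i : ℕ) * x ^ (j : ℕ) := by
  rw [Fin.val_add, ← pow_eq_pow_mod _ hx, pow_add]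

theorem pow_finVal_one [NeZero m] (hx : x ^ m = 1) : x ^ ((1 : Fin m) : ℕ) = x := by
  rw [← Nat.cast_one, Fin.val_natCast, ← pow_eq_pow_mod _ hx, pow_one]

end PowFinVal

namespace CyclicRelations

variable {R : Type*} [CommRing R] {m : ℕ} (c : R)

def modulus (m : ℕ) : Ideal R := Ideal.span {1 - (-c) ^ m}

def weightedSum : (Fin m → R) →ₗ[R] R ⧸ modulus c m :=
  (modulus c m).mkQ ∘ₗ ∑ i : Fin m, (-c) ^ (i : ℕ) • LinearMap.proj i

theorem weightedSum_apply (v : Fin m → R) :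
    weightedSum c v = Ideal.Quotient.mk _ (∑ i : Fin m, (-c) ^ (i : ℕ) * v i) := by
  simp [weightedSum, Ideal.Quotient.mk_eq_mk]

theorem weightedSum_single (i : Fin m) (r : R) :
    weightedSum c (Pi.single i r) = Ideal.Quotient.mk _ ((-c) ^ (i : ℕ) * r) := by
  rw [weightedSum_apply, Finset.sum_eq_single i (fun j _ hj => by simp [hj]) (by simp)]
  simp

theorem mk_neg_pow_eq_one : Ideal.Quotient.mk (modulus c m) (-c) ^ m = 1 := by
  rw [← map_pow, ← map_one (Ideal.Quotient.mk _), eq_comm, Ideal.Quotient.eq]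
  exact Ideal.mem_span_singleton_self _

variable [NeZero m]

def relations : Submodule R (Fin m → R) :=
  Submodule.span R (Set.range fun i : Fin m => c • Pi.single i (1 : R) + Pi.single (i + 1) 1)

theorem weightedSum_surjective : Function.Surjective (weightedSum (m := m) c) := by
  intro x
  obtain ⟨r, rfl⟩ := Ideal.Quotient.mk_surjective x
  exact ⟨Pi.single 0 r, by rw [weightedSum_single, Fin.val_zero, pow_zero, one_mul]⟩

theorem relations_le_ker : relations c ≤ LinearMap.ker (weightedSum (m := m) c) := by
  rw [relations, Submodule.span_le]
  rintro _ ⟨i, rfl⟩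
  simp only [SetLike.mem_coe, LinearMap.mem_ker, map_add, map_smul, weightedSum_single,
    mul_one, map_pow, pow_finVal_add (mk_neg_pow_eq_one c),
    pow_finVal_one (mk_neg_pow_eq_one c)]
  rw [Algebra.smul_def, Ideal.Quotient.algebraMap_eq, map_neg]
  ring

theorem mkQ_single_natCast (j : ℕ) :
    (relations c).mkQ (Pi.single (j : Fin m) 1) =
      (-c) ^ j • (relations c).mkQ (Pi.single 0 1) := by
  induction j with
  | zero => simp
  | succ j ih =>
    have hrel : c • Pi.single (j : Fin m) (1 : R) + Pi.single ((j : Fin m) + 1) 1 ∈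
        relations c := Submodule.subset_span ⟨j, rfl⟩
    rw [← Submodule.Quotient.mk_eq_zero, Submodule.Quotient.mk_add, Submodule.Quotient.mk_smul,
      add_eq_zero_iff_neg_eq] at hrel
    rw [Nat.cast_succ, Submodule.mkQ_apply, ← hrel, ← Submodule.mkQ_apply, ih, pow_succ',
      mul_smul, neg_smul]

theorem mkQ_eq_smul_mkQ_single_zero (v : Fin m → R) :
    (relations c).mkQ v =
      (∑ i : Fin m, (-c) ^ (i : ℕ) * v i) • (relations c).mkQ (Pi.single 0 1) := by
  conv_lhs => rw [← Finset.univ_sum_single v]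
  simp only [map_sum, Finset.sum_smul]
  refine Finset.sum_congr rfl fun i _ => ?_
  have hsingle : Pi.single i (v i) = v i • Pi.single i (1 : R) := by
    rw [← Pi.single_smul, smul_eq_mul, mul_one]
  rw [hsingle, map_smul, ← Fin.cast_val_eq_self i, mkQ_single_natCast, Fin.cast_val_eq_self,
    smul_smul, mul_comm]

theorem modulus_smul_mkQ_single_zero :
    (1 - (-c) ^ m) • (relations c).mkQ (Pi.single (0 : Fin m) 1) = 0 := by
  rw [sub_smul, one_smul, ← mkQ_single_natCast, Fin.natCast_self, sub_self]

theorem ker_weightedSum : LinearMap.ker (weightedSum (m := m) c) = relations c := by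
  refine le_antisymm (fun v hv => ?_) (relations_le_ker c)
  rw [LinearMap.mem_ker, weightedSum_apply, Ideal.Quotient.eq_zero_iff_mem, modulus,
    Ideal.mem_span_singleton'] at hv
  obtain ⟨a, ha⟩ := hv
  rw [← Submodule.Quotient.mk_eq_zero, ← Submodule.mkQ_apply, mkQ_eq_smul_mkQ_single_zero,
    ← ha, mul_smul, modulus_smul_mkQ_single_zero, smul_zero]

noncomputable def quotientEquiv : ((Fin m → R) ⧸ relations c) ≃ₗ[R] R ⧸ modulus c m :=
  (Submodule.quotEquivOfEq _ _ (ker_weightedSum c).symm).trans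
    ((weightedSum c).quotKerEquivOfSurjective (weightedSum_surjective c))

end CyclicRelations

/-- For `n > 0` and `R = ℤ[t,t⁻¹]`, the quotient of `Fin (2n) → R` by the submodule
spanned by the vectors `(t⁻¹ - 1) • e_i + e_{i+1}` (indices cyclic in `Fin (2n)`)
is isomorphic as an `R`-module to `R ⧸ (1 - (1 - t⁻¹)^(2n))`. -/
theorem wheel_meridians_beta_module (n : ℕ) (hn : 0 < n) :
    haveI : NeZero (2 * n) := ⟨by omega⟩
    Nonempty
      (((Fin (2 * n) → LaurentPolynomial ℤ) ⧸ Submodule.span (LaurentPolynomial ℤ)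
          (Set.range fun i : Fin (2 * n) =>
            (T (-1) - 1 : LaurentPolynomial ℤ) •
                (Pi.single i (1 : LaurentPolynomial ℤ) : Fin (2 * n) → LaurentPolynomial ℤ) +
              Pi.single (i + 1) (1 : LaurentPolynomial ℤ))) ≃ₗ[LaurentPolynomial ℤ]
        (LaurentPolynomial ℤ ⧸
          Ideal.span {(1 : LaurentPolynomial ℤ) - (1 - T (-1)) ^ (2 * n)})) := by
  have : NeZero (2 * n) := ⟨by omega⟩
  have equiv := CyclicRelations.quotientEquiv (m := 2 * n) (T (-1) - 1 : LaurentPolynomial ℤ)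
  unfold CyclicRelations.modulus at equiv
  rw [neg_sub] at equiv
  exact ⟨equiv⟩
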